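/- arXiv:1403.3951 — 2 statements merged into one kernel-verified Lean document; each statement's English description precedes it below -/
import Mathlib

section
/- The Koranyi norm N(x,y,z) = ((x^2+y^2)^2 + z^2)^{1/4} on the Heisenberg group H = (R^3, ·) with product (x,y,z)·(x',y',z') = (x+x', y+y', z+z'+2(xy'-x'y)) defines a left-invariant metric d(g,h) = N(g^{-1}h); in particular d satisfies the triangle inequality. -/
/-- The Heisenberg group as `ℝ × ℝ × ℝ`. -/
abbrev H : Type := ℝ × ℝ × ℝ

/-- Heisenberg group multiplication. -/
def Hmul (a b : H) : H :=
  (a.1 + b.1, a.2.1 + b.2.1, a.2.2 + b.2.2 + 2 * (a.1 * b.2.1 - b.1 * a.2.1))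

/-- Heisenberg group inverse. -/
def Hinv (a : H) : H := (-a.1, -a.2.1, -a.2.2)

/-- The Koranyi norm. -/
noncomputable def KN (a : H) : ℝ :=
  ((a.1 ^ 2 + a.2.1 ^ 2) ^ 2 + a.2.2 ^ 2) ^ ((1 : ℝ) / 4)

/-- The Koranyi distance. -/
noncomputable def Hd (a b : H) : ℝ := KN (Hmul (Hinv a) b)

/-- Distance from a point to a set. -/
noncomputable def distSet (p : H) (L : Set H) : ℝ := sInf {r : ℝ | ∃ q ∈ L, r = Hd p q}

/-- The x-axis, a horizontal line. -/
def xAxis : Set H := {q : H | ∃ t : ℝ, q = (t, 0, 0)}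

/-- A general horizontal line through `g` with horizontal direction `v`. -/
def horizLine (g : H) (v : ℝ × ℝ) : Set H :=
  {q : H | ∃ t : ℝ, q = Hmul g (t * v.1, t * v.2, 0)}

/-- The non-horizontality `NH(g) = N(g⁻¹ · π̃(g))`. -/
noncomputable def NH (g : H) : ℝ := KN (Hmul (Hinv g) (g.1, g.2.1, 0))

/-!
Write `w = x + iy` (`horizontalPart`) and `F = |w|² + iz` (`complexGauge`), so that `N² = |F|`.
The group law becomes `F(gh) = F(g) + F(h) + 2 w̄_g w_h`, and since `|w| ≤ N`, the triangle
inequality in `ℂ` gives `N(gh)² ≤ N(g)² + N(h)² + 2 N(g) N(h)`.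
-/

lemma Hinv_Hmul_Hinv (a b : H) : Hinv (Hmul (Hinv a) b) = Hmul (Hinv b) a := by
  ext <;> simp only [Hinv, Hmul] <;> ring

lemma Hmul_Hinv_eq_zero_iff (a b : H) : Hmul (Hinv a) b = 0 ↔ a = b := by
  obtain ⟨x, y, z⟩ := a
  obtain ⟨x', y', z'⟩ := b
  simp only [Hmul, Hinv, Prod.mk_eq_zero, Prod.mk.injEq]
  constructor
  · rintro ⟨hx, hy, hz⟩
    obtain rfl : x = x' := by linarith
    obtain rfl : y = y' := by linarith
    exact ⟨rfl, rfl, by linarith⟩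
  · rintro ⟨rfl, rfl, rfl⟩
    exact ⟨by ring, by ring, by ring⟩

lemma Hinv_Hmul_Hmul_left (g a b : H) :
    Hmul (Hinv (Hmul g a)) (Hmul g b) = Hmul (Hinv a) b := by
  ext <;> simp only [Hinv, Hmul] <;> ring

lemma Hmul_Hinv_Hmul_Hinv (a b c : H) :
    Hmul (Hmul (Hinv a) b) (Hmul (Hinv b) c) = Hmul (Hinv a) c := by
  ext <;> simp only [Hinv, Hmul] <;> ring

noncomputable def horizontalPart (a : H) : ℂ := a.1 + a.2.1 * Complex.I

noncomputable def complexGauge (a : H) : ℂ := ↑(a.1 ^ 2 + a.2.1 ^ 2) + a.2.2 * Complex.I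

lemma complexGauge_Hmul (a b : H) :
    complexGauge (Hmul a b) =
      complexGauge a + complexGauge b +
        2 * starRingEnd ℂ (horizontalPart a) * horizontalPart b := by
  apply Complex.ext <;>
    simp only [complexGauge, horizontalPart, Hmul, map_add, map_mul, Complex.conj_ofReal,
      Complex.conj_I, Complex.add_re, Complex.add_im, Complex.mul_re, Complex.mul_im,
      Complex.ofReal_re, Complex.ofReal_im, Complex.I_re, Complex.I_im, Complex.neg_re,
      Complex.neg_im, Complex.re_ofNat, Complex.im_ofNat] <;>
    ring

lemma KN_nonneg (a : H) : 0 ≤ KN a := by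
  unfold KN; positivity

lemma KN_sq (a : H) : KN a ^ 2 = ‖complexGauge a‖ := by
  have h : (0 : ℝ) ≤ (a.1 ^ 2 + a.2.1 ^ 2) ^ 2 + a.2.2 ^ 2 := by positivity
  rw [Complex.norm_def, complexGauge, Complex.normSq_add_mul_I, KN, ← Real.rpow_natCast,
    ← Real.rpow_mul h, Real.sqrt_eq_rpow]
  norm_num

lemma norm_horizontalPart_le_KN (a : H) : ‖horizontalPart a‖ ≤ KN a := by
  have h : ‖horizontalPart a‖ ^ 2 ≤ KN a ^ 2 := by
    rw [KN_sq, Complex.sq_norm, horizontalPart, Complex.normSq_add_mul_I]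
    simpa [complexGauge, -Complex.ofReal_add, -Complex.ofReal_pow] using
      Complex.re_le_norm (complexGauge a)
  exact (pow_le_pow_iff_left₀ (norm_nonneg _) (KN_nonneg a) two_ne_zero).1 h

lemma KN_Hmul_le (a b : H) : KN (Hmul a b) ≤ KN a + KN b := by
  have h : KN (Hmul a b) ^ 2 ≤ (KN a + KN b) ^ 2 := calc
    KN (Hmul a b) ^ 2
        = ‖complexGauge a + complexGauge b +
            2 * starRingEnd ℂ (horizontalPart a) * horizontalPart b‖ := by
      rw [KN_sq, complexGauge_Hmul]
    _ ≤ ‖complexGauge a‖ + ‖complexGauge b‖ +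
          2 * ‖horizontalPart a‖ * ‖horizontalPart b‖ := by
      refine (norm_add_le _ _).trans (add_le_add (norm_add_le _ _) (le_of_eq ?_))
      simp
    _ ≤ KN a ^ 2 + KN b ^ 2 + 2 * KN a * KN b := by
      have := KN_nonneg a
      have := norm_horizontalPart_le_KN a
      have := norm_horizontalPart_le_KN b
      rw [KN_sq, KN_sq]
      gcongr
    _ = (KN a + KN b) ^ 2 := by ring
  exact (pow_le_pow_iff_left₀ (KN_nonneg _) (add_nonneg (KN_nonneg a) (KN_nonneg b))
    two_ne_zero).1 h

lemma KN_Hinv (a : H) : KN (Hinv a) = KN a := by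
  simp [KN, Hinv]

lemma KN_eq_zero_iff (a : H) : KN a = 0 ↔ a = 0 := by
  obtain ⟨x, y, z⟩ := a
  have h : (0 : ℝ) ≤ (x ^ 2 + y ^ 2) ^ 2 + z ^ 2 := by positivity
  rw [KN, Real.rpow_eq_zero h (by norm_num),
    add_eq_zero_iff_of_nonneg (by positivity) (by positivity), pow_eq_zero_iff two_ne_zero,
    add_eq_zero_iff_of_nonneg (by positivity) (by positivity)]
  simp [and_assoc]

/-- The Koranyi norm defines a left-invariant metric on the Heisenberg group:
left-invariance, symmetry, vanishing exactly on the diagonal, and in particular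
the triangle inequality. -/
theorem koranyi_left_invariant_metric :
    (∀ g a b : H, Hd (Hmul g a) (Hmul g b) = Hd a b) ∧
    (∀ a b : H, Hd a b = Hd b a) ∧
    (∀ a b : H, Hd a b = 0 ↔ a = b) ∧
    (∀ a b c : H, Hd a c ≤ Hd a b + Hd b c) := by
  refine ⟨fun g a b => ?_, fun a b => ?_, fun a b => ?_, fun a b c => ?_⟩
  · rw [Hd, Hd, Hinv_Hmul_Hmul_left]
  · rw [Hd, Hd, ← KN_Hinv, Hinv_Hmul_Hinv]
  · rw [Hd, KN_eq_zero_iff, Hmul_Hinv_eq_zero_iff]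
  · rw [Hd, Hd, Hd, ← Hmul_Hinv_Hmul_Hinv a b c]
    exact KN_Hmul_le _ _
end

section
/- Let L be the x-axis {(t,0,0) : t ∈ R} in the Heisenberg group and p = (0,y,z). Then for all t ∈ R, f(t) := d((t,0,0), p)^4 = (t^2+y^2)^2 + (z-2ty)^2 ≥ (1/16)(y^4 + z^2). -/
theorem KN_pow_four (a : H) : KN a ^ 4 = (a.1 ^ 2 + a.2.1 ^ 2) ^ 2 + a.2.2 ^ 2 := by
  rw [KN, ← Real.rpow_natCast, ← Real.rpow_mul (by positivity)]
  norm_num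

/-- Writing `z = (z - 2ty) + 2ty` and using `4 t²y² ≤ (t² + y²)²`. -/
theorem pow_four_add_sq_le_three_mul (y z t : ℝ) :
    y ^ 4 + z ^ 2 ≤ 3 * ((t ^ 2 + y ^ 2) ^ 2 + (z - 2 * t * y) ^ 2) := by
  have hy : y ^ 4 ≤ (t ^ 2 + y ^ 2) ^ 2 := by nlinarith [sq_nonneg t, sq_nonneg y]
  have hty : 4 * (t * y) ^ 2 ≤ (t ^ 2 + y ^ 2) ^ 2 := by nlinarith [sq_nonneg (t ^ 2 - y ^ 2)]
  have hz : z ^ 2 ≤ 2 * (z - 2 * t * y) ^ 2 + 8 * (t * y) ^ 2 := by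
    nlinarith [sq_nonneg (z - 4 * t * y)]
  linarith [sq_nonneg (z - 2 * t * y)]

/-- For p = (0,y,z) and any point (t,0,0) on the x-axis, the fourth power of the
distance equals (t^2+y^2)^2 + (z-2ty)^2, which is at least (1/16)(y^4+z^2). -/
theorem dist_fourth_power_lower_bound (y z t : ℝ) :
    Hd (t, 0, 0) ((0 : ℝ), y, z) ^ 4 = (t ^ 2 + y ^ 2) ^ 2 + (z - 2 * t * y) ^ 2 ∧
    (t ^ 2 + y ^ 2) ^ 2 + (z - 2 * t * y) ^ 2 ≥ (1 / 16) * (y ^ 4 + z ^ 2) := by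
  refine ⟨?_, ?_⟩
  · rw [Hd, KN_pow_four]
    simp only [Hmul, Hinv]
    ring
  · linarith [pow_four_add_sq_le_three_mul y z t, show 0 ≤ y ^ 4 + z ^ 2 by positivity]
end
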